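/- Let B be a left semi-brace. Then E is an ideal of B if and only if e·b = 0 for all e ∈ E and b ∈ B. -/
import Mathlib


/-- A left semi-brace: `(B,+)` is a left cancellative semigroup, `(B,*)` is a group
(whose identity `1` plays the role of `0` in the additive notation of the paper, and
`a⁻¹` plays the role of `a⁻`), and `a ∘ (b + c) = a ∘ b + a ∘ (a⁻ + c)` holds. -/
class LeftSemiBrace (B : Type*) extends Group B, Add B where
  add_assoc : ∀ a b c : B, a + b + c = a + (b + c)
  add_left_cancel : ∀ a b c : B, a + b = a + c → b = c
  circ_add : ∀ a b c : B, a * (b + c) = a * b + a * (a⁻¹ + c)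

namespace LeftSemiBrace

variable {B : Type*} [LeftSemiBrace B]

/-- The set `E` of additive idempotents. -/
def E (B : Type*) [LeftSemiBrace B] : Set B := {e | e + e = e}

/-- The set `G = B + 0`. -/
def G (B : Type*) [LeftSemiBrace B] : Set B := {x | ∃ b : B, x = b + 1}

/-- `λ_a (b) = a ∘ (a⁻ + b)`. -/
def lam (a b : B) : B := a * (a⁻¹ + b)

/-- `ρ_b (a) = (a⁻ + b)⁻ ∘ b`. -/
def rho (b a : B) : B := (a⁻¹ + b)⁻¹ * b

/-- `a · b = λ_a(a⁻) + a ∘ b + λ_b(b⁻)`. -/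
def dot (a b : B) : B := lam a a⁻¹ + a * b + lam b b⁻¹

/-- The group part `g_b = b + 0` of an element `b`. -/
def gp (b : B) : B := b + 1

/-- The additive inverse (within the group `(G,+)`) of the group part of an element:
for `g ∈ G` one has `neg g = -g`, since `-g_a = λ_a(a⁻) = a ∘ (a⁻ + a⁻)`. -/
def neg (a : B) : B := a * (a⁻¹ + a⁻¹)

/-- The idempotent part `e_b = -g_b + b` of an element `b`. -/
def ep (b : B) : B := neg (gp b) + b

/-- `S` is a subsemigroup of `(B,+)`. -/
def IsAddSubsemigroup (S : Set B) : Prop := ∀ x ∈ S, ∀ y ∈ S, x + y ∈ S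

/-- `S` is a subgroup of the multiplicative group `(B,∘)`. -/
def IsCircSubgroup (S : Set B) : Prop :=
  (1 : B) ∈ S ∧ (∀ x ∈ S, ∀ y ∈ S, x * y ∈ S) ∧ ∀ x ∈ S, x⁻¹ ∈ S

/-- `S` is a normal subgroup of the multiplicative group `(B,∘)`. -/
def IsCircNormal (S : Set B) : Prop :=
  IsCircSubgroup S ∧ ∀ x ∈ S, ∀ b : B, b * x * b⁻¹ ∈ S

/-- `S` is a subgroup of the group `(G,+)`. -/
def IsAddSubgroupOfG (S : Set B) : Prop :=
  S ⊆ G B ∧ (1 : B) ∈ S ∧ (∀ x ∈ S, ∀ y ∈ S, x + y ∈ S) ∧ ∀ x ∈ S, neg x ∈ S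

/-- `S` is a normal subgroup of the group `(G,+)`. -/
def IsAddNormalSubgroupOfG (S : Set B) : Prop :=
  IsAddSubgroupOfG S ∧ ∀ g ∈ G B, ∀ x ∈ S, g + x + neg g ∈ S

/-- `I` is an ideal of the left semi-brace `B` (Definition 17 of Catino–Colazzo–Stefanelli):
`I` is a subsemigroup of `(B,+)`, a normal subgroup of `(B,∘)`, `I ∩ G` is a normal
subgroup of `(G,+)`, `ρ_b(n) ∈ I` for all `b ∈ B`, `n ∈ I ∩ G`, and `λ_g(e) ∈ I` for all
`g ∈ G`, `e ∈ I ∩ E`. -/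
def IsIdeal (I : Set B) : Prop :=
  IsAddSubsemigroup I ∧ IsCircNormal I ∧ IsAddNormalSubgroupOfG (I ∩ G B) ∧
    (∀ b : B, ∀ n ∈ I ∩ G B, rho b n ∈ I) ∧
    (∀ g ∈ G B, ∀ e ∈ I ∩ E B, lam g e ∈ I)

/-- `I` is a left ideal of the left semi-brace `B`. -/
def IsLeftIdeal (I : Set B) : Prop :=
  (∀ x ∈ I, x + 1 ∈ I) ∧ IsAddSubgroupOfG (I ∩ G B) ∧
    (∀ g ∈ G B, ∀ x ∈ I, lam g x ∈ I) ∧ IsCircSubgroup I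

/-- The subgroup of `(G,+)` generated by a subset `S` of `G`. -/
def addClosure (S : Set B) : Set B :=
  ⋂₀ {T : Set B | S ⊆ T ∧ (1 : B) ∈ T ∧ (∀ x ∈ T, ∀ y ∈ T, x + y ∈ T) ∧ ∀ x ∈ T, neg x ∈ T}

/-- `X · Y`: the subgroup of `(G,+)` generated by `{x · y : x ∈ X, y ∈ Y}`. -/
def dotSet (X Y : Set B) : Set B := addClosure {z | ∃ x ∈ X, ∃ y ∈ Y, z = dot x y}

/-- `S + E = {s + e : s ∈ S, e ∈ E}`. -/
def addE (S : Set B) : Set B := {z | ∃ s ∈ S, ∃ e ∈ E B, z = s + e}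

/-- The right series of `B`: `rightSeries B n = B^(n+1)`, where `B^(1) = B` and
`B^(n+1) = B^(n) · B + E`. -/
def rightSeries (B : Type*) [LeftSemiBrace B] : ℕ → Set B
  | 0 => Set.univ
  | n + 1 => addE (dotSet (rightSeries B n) Set.univ)

/-- The left series of `B`: `leftSeries B n = B^(n+1)`, where `B^1 = B` and
`B^(n+1) = B · B^n + E`. -/
def leftSeries (B : Type*) [LeftSemiBrace B] : ℕ → Set B
  | 0 => Set.univ
  | n + 1 => addE (dotSet Set.univ (leftSeries B n))

/-- The right series of the skew left brace `G`: `rightSeriesG B n = G^(n+1)`, where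
`G^(1) = G` and `G^(n+1) = G^(n) · G`. -/
def rightSeriesG (B : Type*) [LeftSemiBrace B] : ℕ → Set B
  | 0 => G B
  | n + 1 => dotSet (rightSeriesG B n) (G B)

/-- The series `bracketSeries B n = B^[n+1]`, where `B^[1] = B` and `B^[n+1] = H_n + E`
with `H_n` the subgroup of `(G,+)` generated by `⋃_{i=1}^{n} B^[i] · B^[n+1-i]`. -/
def bracketSeries (B : Type*) [LeftSemiBrace B] : ℕ → Set B
  | 0 => Set.univ
  | n + 1 =>
      addE (addClosure (⋃ i : Fin (n + 1),
        dotSet (bracketSeries B i.1) (bracketSeries B (n - i.1))))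
  decreasing_by
  · exact i.isLt
  · exact Nat.lt_succ_of_le (Nat.sub_le n i.1)

/-- The socle `Soc(B) = {a ∈ B : ρ_a = ρ_0, λ_a = λ_0}`. -/
def Soc (B : Type*) [LeftSemiBrace B] : Set B :=
  {a | rho a = rho (1 : B) ∧ lam a = lam (1 : B)}

/-- The generalized socle `Zoc(B) = Soc(B) + E`. -/
def Zoc (B : Type*) [LeftSemiBrace B] : Set B :=
  {z | ∃ a ∈ Soc B, ∃ e ∈ E B, z = a + e}

/-- The lower central series of the group `(G,+)`:  `γ_1 = G` and `γ_{n+1}` is the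
subgroup of `(G,+)` generated by the additive commutators `-x - y + x + y` with
`x ∈ γ_n`, `y ∈ G`. -/
def lowerCentralSeriesG (B : Type*) [LeftSemiBrace B] : ℕ → Set B
  | 0 => G B
  | n + 1 => addClosure
      {z | ∃ x ∈ lowerCentralSeriesG B n, ∃ y ∈ G B, z = neg x + neg y + x + y}

/-- The group `(G,+)` is nilpotent. -/
def IsNilpotentGAdd (B : Type*) [LeftSemiBrace B] : Prop :=
  ∃ n : ℕ, lowerCentralSeriesG B n = {(1 : B)}

section Aux

variable {B : Type*} [LeftSemiBrace B]

lemma one_add' (c : B) : (1 : B) + c = c := by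
  have h := LeftSemiBrace.circ_add (1:B) c c
  simp only [one_mul, inv_one] at h
  exact (LeftSemiBrace.add_left_cancel c c ((1:B)+c) h).symm

lemma mul_eq_add_lam (a c : B) : a * c = a + lam a c := by
  have h := LeftSemiBrace.circ_add a 1 c
  rw [mul_one, one_add'] at h
  exact h

lemma lam_add' (a c d : B) : lam a c + lam a d = lam a (c + d) := by
  have h := LeftSemiBrace.circ_add a (a⁻¹ + c) d
  rw [LeftSemiBrace.add_assoc] at h
  exact h.symm

lemma add_neg_self' (a : B) : a + neg a = 1 := by
  have h := mul_eq_add_lam a a⁻¹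
  rw [mul_inv_cancel] at h
  exact h.symm

lemma neg_add_one' (a : B) : neg a + 1 = neg a := by
  have h1 : (a + 1) + neg a = 1 := by
    rw [LeftSemiBrace.add_assoc, one_add', add_neg_self']
  have h2 : (a + 1) + (neg a + 1) = 1 := by
    rw [LeftSemiBrace.add_assoc, one_add', ← LeftSemiBrace.add_assoc,
      add_neg_self', one_add']
  exact LeftSemiBrace.add_left_cancel (a+1) (neg a + 1) (neg a) (h2.trans h1.symm)

lemma neg_add_gp (a : B) : neg a + (a + 1) = 1 := by
  calc neg a + (a + 1) = (neg a + a) + 1 := (LeftSemiBrace.add_assoc _ _ _).symm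
    _ = (neg a + a) + (neg a + neg (neg a)) := by rw [add_neg_self']
    _ = neg a + (a + neg a) + neg (neg a) := by
        rw [LeftSemiBrace.add_assoc, LeftSemiBrace.add_assoc, LeftSemiBrace.add_assoc]
    _ = (neg a + 1) + neg (neg a) := by rw [add_neg_self']
    _ = neg a + neg (neg a) := by rw [neg_add_one']
    _ = 1 := add_neg_self' _

lemma mem_E_iff' {e : B} : e ∈ E B ↔ e + 1 = 1 := by
  constructor
  · intro h
    have he : e + e = e := h
    have h1 : e + 1 = e + (e + neg e) := by rw [add_neg_self']
    rw [← LeftSemiBrace.add_assoc, he] at h1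
    rw [h1, add_neg_self']
  · intro h
    show e + e = e
    have h1 : e + e = e + (1 + e) := by rw [one_add']
    rw [← LeftSemiBrace.add_assoc, h, one_add'] at h1
    exact h1

lemma eq_one_of_add_left' {y u : B} (h : y + u = u) : y + 1 = 1 := by
  rw [← add_neg_self' u, ← LeftSemiBrace.add_assoc, h]

lemma neg_eq_one_of_mem_E {e : B} (he : e ∈ E B) : neg e = 1 := by
  have h1 : neg e + (e + 1) = 1 := neg_add_gp e
  rw [mem_E_iff'.mp he] at h1
  rw [← neg_add_one' e, h1]

lemma lam_mem_E (a : B) {e : B} (he : e ∈ E B) : lam a e ∈ E B := by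
  have h : e + e = e := he
  show lam a e + lam a e = lam a e
  rw [lam_add', h]

lemma lam_lam' (a b c : B) : lam a (lam b c) = lam (a * b) c := by
  have h : b * (b⁻¹ * a⁻¹ + c) = a⁻¹ + b * (b⁻¹ + c) := by
    have h0 := LeftSemiBrace.circ_add b (b⁻¹ * a⁻¹) c
    rw [← mul_assoc, mul_inv_cancel, one_mul] at h0
    exact h0
  show a * (a⁻¹ + b * (b⁻¹ + c)) = (a*b) * ((a*b)⁻¹ + c)
  rw [← h, ← mul_assoc, mul_inv_rev]

lemma lam_one' (b : B) : lam (1 : B) b = b := by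
  show (1 : B) * ((1:B)⁻¹ + b) = b
  rw [inv_one, one_mul, one_add']

lemma one_mem_E' : (1 : B) ∈ E B := by
  show (1 : B) + 1 = 1
  exact one_add' 1

lemma eq_one_of_mem_E_inter_G {x : B} (h : x ∈ E B ∩ G B) : x = 1 := by
  obtain ⟨hE, b, hb⟩ := h
  have h1 : x + 1 = x := by
    rw [hb, LeftSemiBrace.add_assoc, one_add']
  rw [← h1, mem_E_iff'.mp hE]

lemma lam_self_one {e : B} (he : e ∈ E B) : lam e 1 = e := by
  have h1 : e + lam e 1 = e + e := by
    have := mul_eq_add_lam e 1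
    rw [mul_one] at this
    have he' : e + e = e := he
    rw [← this, he']
  exact LeftSemiBrace.add_left_cancel e (lam e 1) e h1

lemma inv_mem_E {e : B} (he : e ∈ E B) : e⁻¹ ∈ E B := by
  have h : e * (e⁻¹ + 1) = e * 1 := by
    rw [mul_one]; exact lam_self_one he
  exact mem_E_iff'.mpr (mul_left_cancel h)

lemma mul_mem_E {x y : B} (hx : x ∈ E B) (hy : y ∈ E B) : x * y ∈ E B := by
  apply mem_E_iff'.mpr
  rw [mul_eq_add_lam, LeftSemiBrace.add_assoc,
    mem_E_iff'.mp (lam_mem_E x hy), mem_E_iff'.mp hx]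

end Aux

/-- `E` is an ideal of `B` iff `e·b = 0` for all `e ∈ E`, `b ∈ B`. -/
theorem E_isIdeal_iff_dot (B : Type*) [LeftSemiBrace B] :
    IsIdeal (E B) ↔ ∀ e ∈ E B, ∀ b : B, dot e b = 1 := by
  constructor
  · rintro ⟨-, ⟨-, hnorm⟩, -, -, -⟩ e he b
    -- from normality, `f := b⁻¹ * e * b ∈ E`
    have hf : b⁻¹ * e * b ∈ E B := by
      have := hnorm e he b⁻¹
      rwa [inv_inv] at this
    have hbf : b * (b⁻¹ * e * b) = e * b := by
      rw [← mul_assoc, ← mul_assoc, mul_inv_cancel, one_mul]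
    have hgp : e * b + 1 = b + 1 := by
      rw [← hbf, mul_eq_add_lam, LeftSemiBrace.add_assoc,
        mem_E_iff'.mp (lam_mem_E b hf)]
    have hne : lam e e⁻¹ = 1 := neg_eq_one_of_mem_E he
    show (lam e e⁻¹ + e * b) + lam b b⁻¹ = 1
    calc (lam e e⁻¹ + e * b) + lam b b⁻¹
        = (1 + e * b) + lam b b⁻¹ := by rw [hne]
      _ = e * b + lam b b⁻¹ := by rw [one_add']
      _ = e * b + (1 + lam b b⁻¹) := by rw [one_add']
      _ = (e * b + 1) + lam b b⁻¹ := by rw [LeftSemiBrace.add_assoc]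
      _ = (b + 1) + lam b b⁻¹ := by rw [hgp]
      _ = b + (1 + lam b b⁻¹) := by rw [LeftSemiBrace.add_assoc]
      _ = b + neg b := by rw [one_add']; rfl
      _ = 1 := add_neg_self' b
  · intro hdot
    -- the key: E is normal in (B, ∘)
    have hconj : ∀ x ∈ E B, ∀ b : B, b * x * b⁻¹ ∈ E B := by
      intro x hx b
      have h := hdot x hx b⁻¹
      have hne : lam x x⁻¹ = 1 := neg_eq_one_of_mem_E hx
      have h1 : x * b⁻¹ + lam b⁻¹ b = 1 := by
        have h2 : (lam x x⁻¹ + x * b⁻¹) + lam b⁻¹ (b⁻¹)⁻¹ = 1 := h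
        rwa [hne, one_add', inv_inv] at h2
      have h3 : b * (x * b⁻¹ + lam b⁻¹ b) = b * x * b⁻¹ + lam b (lam b⁻¹ b) :=
        by
          have h4 := LeftSemiBrace.circ_add b (x * b⁻¹) (lam b⁻¹ b)
          rw [← mul_assoc] at h4
          exact h4
      rw [h1, mul_one, lam_lam', mul_inv_cancel, lam_one'] at h3
      exact mem_E_iff'.mpr (eq_one_of_add_left' h3.symm)
    refine ⟨?_, ⟨⟨one_mem_E', fun x hx y hy => mul_mem_E hx hy,
        fun x hx => inv_mem_E hx⟩, hconj⟩, ⟨⟨Set.inter_subset_right, ?_, ?_, ?_⟩, ?_⟩,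
        ?_, ?_⟩
    · -- additive subsemigroup
      intro x hx y hy
      apply mem_E_iff'.mpr
      rw [LeftSemiBrace.add_assoc, mem_E_iff'.mp hy, mem_E_iff'.mp hx]
    · -- 1 ∈ E ∩ G
      exact ⟨one_mem_E', 1, (one_add' 1).symm⟩
    · -- E ∩ G closed under +
      intro x hx y hy
      rw [eq_one_of_mem_E_inter_G hx, eq_one_of_mem_E_inter_G hy, one_add']
      exact ⟨one_mem_E', 1, (one_add' 1).symm⟩
    · -- E ∩ G closed under neg
      intro x hx
      rw [eq_one_of_mem_E_inter_G hx]
      have hneg1 : neg (1 : B) = 1 := by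
        show (1 : B) * ((1:B)⁻¹ + (1:B)⁻¹) = 1
        rw [inv_one, one_mul, one_add']
      rw [hneg1]
      exact ⟨one_mem_E', 1, (one_add' 1).symm⟩
    · -- normality in (G, +)
      intro g hg x hx
      rw [eq_one_of_mem_E_inter_G hx]
      obtain ⟨b, hb⟩ := hg
      have hg1 : g + 1 = g := by rw [hb, LeftSemiBrace.add_assoc, one_add']
      rw [hg1, add_neg_self' g]
      exact ⟨one_mem_E', 1, (one_add' 1).symm⟩
    · -- rho condition
      intro b n hn
      have hn1 : n = 1 := eq_one_of_mem_E_inter_G hn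
      have : rho b n = 1 := by
        rw [hn1]
        show ((1:B)⁻¹ + b)⁻¹ * b = 1
        rw [inv_one, one_add', inv_mul_cancel]
      rw [this]; exact one_mem_E'
    · -- lambda condition
      intro g _ e he
      exact lam_mem_E g he.1

end LeftSemiBrace
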